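/- Let Ω ⊆ ℝ³ be open, let B : Ω → ℝ³ be continuously differentiable with B(x) ≠ 0 for all x ∈ Ω, let b = B/‖B‖ be the unit field, and let ω_c ≠ 0 be a real constant. Let I be an open real interval and let p, ξ : I → ℝ and X : I → Ω be differentiable functions such that for all t ∈ I, with γ = √(1 + p(t)²), B* = B(X(t)) − ξ(t)·p(t)·(∇×b)(X(t)), and B*∥ = ⟨B*, b(X(t))⟩ assumed nonzero, the guiding center equations hold: p′(t) = 0; ξ′(t) = −p(t)(1 − ξ(t)²) / (2γ·B*∥) · ⟨B*, ∇(ln‖B‖)(X(t))⟩; and X′(t) = (ξ(t)·p(t)/γ)·B*/B*∥ − (1/ω_c)·(p(t)²(1 − ξ(t)²)/(2γ·B*∥))·(b(X(t)) × ∇(ln‖B‖)(X(t))). Then the magnetic moment μ(t) = (1 − ξ(t)²)·p(t)² / ‖B(X(t))‖ is constant on I. -/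

import Mathlib

/-! Write `μ = (1 - ξ²) p² exp (-ln B)`. The drift `b × ∇ln B` is orthogonal to `∇ln B`, so `ln B`
changes only through parallel streaming: `d(ln B)/dt = ξ p k` with `k = ⟨B*, ∇ln B⟩ / (γ B*∥)`,
while `dξ/dt = -p (1 - ξ²) k / 2` with the same `k`, and `p` is constant. The two contributions
to `dμ/dt` cancel, so `μ` is constant on the time interval. -/

open RealInnerProductSpace

/-- Componentwise partial derivative of a scalar function on ℝ³ in the i-th
coordinate direction. -/
noncomputable def partialDeriv3 (F : EuclideanSpace ℝ (Fin 3) → ℝ) (i : Fin 3)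
    (x : EuclideanSpace ℝ (Fin 3)) : ℝ :=
  fderiv ℝ F x (EuclideanSpace.single i 1)

/-- Curl of a vector field on ℝ³, taken componentwise via partial derivatives. -/
noncomputable def curl3 (F : EuclideanSpace ℝ (Fin 3) → EuclideanSpace ℝ (Fin 3))
    (x : EuclideanSpace ℝ (Fin 3)) : EuclideanSpace ℝ (Fin 3) :=
  (WithLp.equiv 2 (Fin 3 → ℝ)).symm
    ![partialDeriv3 (fun y => F y 2) 1 x - partialDeriv3 (fun y => F y 1) 2 x,
      partialDeriv3 (fun y => F y 0) 2 x - partialDeriv3 (fun y => F y 2) 0 x,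
      partialDeriv3 (fun y => F y 1) 0 x - partialDeriv3 (fun y => F y 0) 1 x]

/-- Cross product in ℝ³. -/
noncomputable def cross3 (u v : EuclideanSpace ℝ (Fin 3)) : EuclideanSpace ℝ (Fin 3) :=
  (WithLp.equiv 2 (Fin 3 → ℝ)).symm
    (crossProduct (WithLp.equiv 2 (Fin 3 → ℝ) u) (WithLp.equiv 2 (Fin 3 → ℝ) v))

lemma inner_cross3_self (u v : EuclideanSpace ℝ (Fin 3)) : ⟪v, cross3 u v⟫ = 0 := by
  simp [cross3, EuclideanSpace.inner_eq_star_dotProduct, dotProduct_comm]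

lemma HasGradientAt.comp_hasDerivAt {E : Type*} [NormedAddCommGroup E] [InnerProductSpace ℝ E]
    [CompleteSpace E] {L : E → ℝ} {g : E} {X : ℝ → E} {v : E} {t : ℝ}
    (hL : HasGradientAt L g (X t)) (hX : HasDerivAt X v t) :
    HasDerivAt (fun s => L (X s)) ⟪g, v⟫ t := by
  have := hL.hasFDerivAt.comp_hasDerivAt t hX
  rwa [InnerProductSpace.toDual_apply_apply] at this

lemma HasGradientAt.comp_hasDerivAt_sub_smul_cross3 {L : EuclideanSpace ℝ (Fin 3) → ℝ}
    {g w V : EuclideanSpace ℝ (Fin 3)} {X : ℝ → EuclideanSpace ℝ (Fin 3)} {a c t : ℝ}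
    (hL : HasGradientAt L g (X t)) (hX : HasDerivAt X (a • V - c • cross3 w g) t) :
    HasDerivAt (fun s => L (X s)) (a * ⟪V, g⟫) t := by
  convert hL.comp_hasDerivAt hX using 1
  rw [inner_sub_right, inner_smul_right, inner_smul_right, inner_cross3_self, real_inner_comm]
  ring

lemma hasDerivAt_one_sub_sq_mul_sq_mul_exp_neg_eq_zero {p ξ ℓ : ℝ → ℝ} {t k : ℝ}
    (hp : HasDerivAt p 0 t) (hξ : HasDerivAt ξ (-(p t * (1 - ξ t ^ 2)) / 2 * k) t)
    (hℓ : HasDerivAt ℓ (ξ t * p t * k) t) :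
    HasDerivAt (fun s => (1 - ξ s ^ 2) * p s ^ 2 * Real.exp (-ℓ s)) 0 t := by
  have h : HasDerivAt (fun s => (1 - ξ s ^ 2) * p s ^ 2 * Real.exp (-ℓ s)) _ t :=
    (((hasDerivAt_const t (1 : ℝ)).sub (hξ.pow 2)).mul (hp.pow 2)).mul hℓ.neg.exp
  refine h.congr_deriv ?_
  simp only [Pi.mul_apply, Pi.sub_apply, Pi.pow_apply, Pi.neg_apply]
  ring

theorem guiding_center_magnetic_moment_conserved_general
    (Ω : Set (EuclideanSpace ℝ (Fin 3))) (hΩ : IsOpen Ω)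
    (B : EuclideanSpace ℝ (Fin 3) → EuclideanSpace ℝ (Fin 3))
    (hB : ContDiffOn ℝ 1 B Ω)
    (hBne : ∀ x ∈ Ω, B x ≠ 0)
    (b : EuclideanSpace ℝ (Fin 3) → EuclideanSpace ℝ (Fin 3))
    (ωc : ℝ)
    (t₀ t₁ : ℝ) (I : Set ℝ) (hI : I = Set.Ioo t₀ t₁)
    (p ξ : ℝ → ℝ) (X : ℝ → EuclideanSpace ℝ (Fin 3))
    (hXΩ : ∀ t ∈ I, X t ∈ Ω)
    (γ : ℝ → ℝ)
    (Bstar : ℝ → EuclideanSpace ℝ (Fin 3))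
    (Bspar : ℝ → ℝ)
    (hp : ∀ t ∈ I, HasDerivAt p 0 t)
    (hξ : ∀ t ∈ I, HasDerivAt ξ
      (-(p t * (1 - ξ t ^ 2)) / (2 * γ t * Bspar t) *
        ⟪Bstar t, gradient (fun y => Real.log ‖B y‖) (X t)⟫) t)
    (hX : ∀ t ∈ I, HasDerivAt X
      ((ξ t * p t / γ t / Bspar t) • Bstar t
        - ((1 / ωc) * (p t ^ 2 * (1 - ξ t ^ 2) / (2 * γ t * Bspar t))) •
            cross3 (b (X t)) (gradient (fun y => Real.log ‖B y‖) (X t))) t) :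
    ∀ t ∈ I, ∀ t' ∈ I,
      (1 - ξ t ^ 2) * p t ^ 2 / ‖B (X t)‖
        = (1 - ξ t' ^ 2) * p t' ^ 2 / ‖B (X t')‖ := by
  subst hI
  set μ : ℝ → ℝ := fun s => (1 - ξ s ^ 2) * p s ^ 2 * Real.exp (-Real.log ‖B (X s)‖)
  have hμ' : ∀ s ∈ Set.Ioo t₀ t₁, HasDerivAt μ 0 s := by
    intro s hs
    have hBs : B (X s) ≠ 0 := hBne _ (hXΩ s hs)
    have hBd : DifferentiableAt ℝ B (X s) :=
      (hB.differentiableOn one_ne_zero).differentiableAt (hΩ.mem_nhds (hXΩ s hs))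
    have hL := ((hBd.norm ℝ hBs).log (norm_ne_zero_iff.mpr hBs)).hasGradientAt
    refine hasDerivAt_one_sub_sq_mul_sq_mul_exp_neg_eq_zero
      (k := ⟪Bstar s, gradient (fun y => Real.log ‖B y‖) (X s)⟫ / (γ s * Bspar s)) (hp s hs)
      ((hξ s hs).congr_deriv ?_) ((hL.comp_hasDerivAt_sub_smul_cross3 (hX s hs)).congr_deriv ?_)
    all_goals ring
  have hμ_eq : ∀ s ∈ Set.Ioo t₀ t₁, (1 - ξ s ^ 2) * p s ^ 2 / ‖B (X s)‖ = μ s := fun s hs => by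
    simp only [μ, Real.exp_neg, Real.exp_log (norm_pos_iff.mpr (hBne _ (hXΩ s hs))), div_eq_mul_inv]
  intro t ht t' ht'
  rw [hμ_eq t ht, hμ_eq t' ht']
  exact isOpen_Ioo.is_const_of_deriv_eq_zero isPreconnected_Ioo
    (fun s hs => (hμ' s hs).differentiableAt.differentiableWithinAt) (fun s hs => (hμ' s hs).deriv)
    ht ht'

/-- Exact conservation of the magnetic moment
μ = (1 − ξ²)p²/‖B(X)‖ along solutions of the relativistic guiding center
equations (no collisions, radiation or electric field). -/
theorem guiding_center_magnetic_moment_conserved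
    (Ω : Set (EuclideanSpace ℝ (Fin 3))) (hΩ : IsOpen Ω)
    (B : EuclideanSpace ℝ (Fin 3) → EuclideanSpace ℝ (Fin 3))
    (hB : ContDiffOn ℝ 1 B Ω)
    (hBne : ∀ x ∈ Ω, B x ≠ 0)
    (b : EuclideanSpace ℝ (Fin 3) → EuclideanSpace ℝ (Fin 3))
    (hb : ∀ x, b x = ‖B x‖⁻¹ • B x)
    (ωc : ℝ) (hωc : ωc ≠ 0)
    (t₀ t₁ : ℝ) (I : Set ℝ) (hI : I = Set.Ioo t₀ t₁)
    (p ξ : ℝ → ℝ) (X : ℝ → EuclideanSpace ℝ (Fin 3))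
    (hXΩ : ∀ t ∈ I, X t ∈ Ω)
    (γ : ℝ → ℝ) (hγ : ∀ t, γ t = Real.sqrt (1 + p t ^ 2))
    (Bstar : ℝ → EuclideanSpace ℝ (Fin 3))
    (hBstar : ∀ t, Bstar t = B (X t) - (ξ t * p t) • curl3 b (X t))
    (Bspar : ℝ → ℝ)
    (hBspar : ∀ t, Bspar t = ⟪Bstar t, b (X t)⟫)
    (hBsparne : ∀ t ∈ I, Bspar t ≠ 0)
    (hp : ∀ t ∈ I, HasDerivAt p 0 t)
    (hξ : ∀ t ∈ I, HasDerivAt ξ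
      (-(p t * (1 - ξ t ^ 2)) / (2 * γ t * Bspar t) *
        ⟪Bstar t, gradient (fun y => Real.log ‖B y‖) (X t)⟫) t)
    (hX : ∀ t ∈ I, HasDerivAt X
      ((ξ t * p t / γ t / Bspar t) • Bstar t
        - ((1 / ωc) * (p t ^ 2 * (1 - ξ t ^ 2) / (2 * γ t * Bspar t))) •
            cross3 (b (X t)) (gradient (fun y => Real.log ‖B y‖) (X t))) t) :
    ∀ t ∈ I, ∀ t' ∈ I,
      (1 - ξ t ^ 2) * p t ^ 2 / ‖B (X t)‖
        = (1 - ξ t' ^ 2) * p t' ^ 2 / ‖B (X t')‖ :=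
  guiding_center_magnetic_moment_conserved_general Ω hΩ B hB hBne b ωc t₀ t₁ I hI p ξ X hXΩ γ Bstar
    Bspar hp hξ hX
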